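/- From the position Q, after Alfred places a chap at c4, Alfred has a winning strategy from the resulting position (with Betty to move): the jump ↗ from a2 over b3 and c4 to d5 reaches the top row, and no chap placement or jump available to Betty prevents Alfred from winning on his next turn. -/
import Mathlib


/-!
Formalization of Philosophers' Phutball on an `m × n` board (`m` rows, `n` columns).
Points are pairs `(column, row)` of integers, with columns `1, …, n` (a, b, c, …)
and rows `1, …, m` (bottom to top).  Player `true` is Alfred (first player, aims
for the top row `m`); player `false` is Betty (aims for the bottom row `1`).
-/

/-- A player: `true` is Alfred, `false` is Betty. -/
abbrev Player := Bool

/-- A Phutball position: the ball's point `(column, row)`, the finite set of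
chaps, and the player whose turn it is. -/
structure PState where
  ball : ℤ × ℤ
  chaps : Finset (ℤ × ℤ)
  turn : Player
deriving DecidableEq

/-- The eight horizontal, vertical and diagonal directions. -/
def dirs : Finset (ℤ × ℤ) :=
  {(1, 0), (1, 1), (0, 1), (-1, 1), (-1, 0), (-1, -1), (0, -1), (1, -1)}

/-- The point reached from `b` after `i` steps in direction `d`. -/
def ray (b d : ℤ × ℤ) (i : ℤ) : ℤ × ℤ := (b.1 + i * d.1, b.2 + i * d.2)

/-- A point is on the `m × n` board. -/
def OnBoard (m n : ℤ) (p : ℤ × ℤ) : Prop :=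
  1 ≤ p.1 ∧ p.1 ≤ n ∧ 1 ≤ p.2 ∧ p.2 ≤ m

/-- A single hop on a board with `n` columns: the ball at `b` moves in one of the
eight directions `d` over a contiguous nonempty line of `k` chaps, landing on the
first point beyond them that carries no chap; the jumped-over chaps are removed.
The landing point must not lie onto or past the sidelines (outside columns
`1, …, n`), but it may lie past the top or bottom row. -/
def Hop (n : ℤ) (b : ℤ × ℤ) (c : Finset (ℤ × ℤ)) (b' : ℤ × ℤ) (c' : Finset (ℤ × ℤ)) : Prop :=
  ∃ d ∈ dirs, ∃ k : ℕ, 1 ≤ k ∧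
    (∀ i : ℕ, 1 ≤ i → i ≤ k → ray b d i ∈ c) ∧
    ray b d (k + 1) ∉ c ∧
    1 ≤ (ray b d (k + 1)).1 ∧ (ray b d (k + 1)).1 ≤ n ∧
    b' = ray b d (k + 1) ∧
    c' = c \ Finset.image (fun i : ℕ => ray b d i) (Finset.Icc 1 k)

/-- A jump is a nonempty sequence of hops (the player may stop after any hop,
and the removed chaps cannot be re-used by later hops of the same jump).  The
jump can continue after a hop only if the ball has not been carried past the top
or bottom row (which would end the game immediately). -/
inductive Jump (m n : ℤ) : ℤ × ℤ → Finset (ℤ × ℤ) → ℤ × ℤ → Finset (ℤ × ℤ) → Prop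
  | single {b c b' c'} : Hop n b c b' c' → Jump m n b c b' c'
  | cons {b c b₁ c₁ b' c'} : Hop n b c b₁ c₁ → 1 ≤ b₁.2 → b₁.2 ≤ m →
      Jump m n b₁ c₁ b' c' → Jump m n b c b' c'

/-- The winner, if any, of a position (evaluated between turns): Alfred wins if
the ball rests on the top row `m` or has been carried past it; Betty wins if the
ball rests on the bottom row `1` or has been carried past it. -/
def winner (m : ℤ) (s : PState) : Option Player :=
  if m ≤ s.ball.2 then some true else if s.ball.2 ≤ 1 then some false else none

/-- A single legal move on the `m × n` board: the player to move either places a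
chap on a vacant on-board point, or moves the ball by a jump; the turn passes to
the other player. -/
def MoveRel (m n : ℤ) (s t : PState) : Prop :=
  t.turn = !s.turn ∧
    ((∃ p, OnBoard m n p ∧ p ∉ s.chaps ∧ p ≠ s.ball ∧
        t.ball = s.ball ∧ t.chaps = insert p s.chaps) ∨
      Jump m n s.ball s.chaps t.ball t.chaps)

/-- An infinite record of play: while the game is not over and a legal move
exists, a legal move is made; otherwise the position is frozen forever. -/
def IsPlay (m n : ℤ) (f : ℕ → PState) : Prop :=
  ∀ k,
    (winner m (f k) = none ∧ (∃ t, MoveRel m n (f k) t) ∧ MoveRel m n (f k) (f (k + 1))) ∨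
    ((winner m (f k) ≠ none ∨ ¬ ∃ t, MoveRel m n (f k) t) ∧ f (k + 1) = f k)

/-- A strategy for player `p` that always proposes a legal move whenever the game
is not over, it is `p`'s turn, and some legal move exists. -/
def LegalStrategy (m n : ℤ) (p : Player) (σ : PState → PState) : Prop :=
  ∀ s, s.turn = p → winner m s = none → (∃ t, MoveRel m n s t) → MoveRel m n s (σ s)

/-- The play `f` follows the strategy `σ` of player `p`. -/
def Follows (m n : ℤ) (p : Player) (σ : PState → PState) (f : ℕ → PState) : Prop :=
  ∀ k, (f k).turn = p → winner m (f k) = none → (∃ t, MoveRel m n (f k) t) →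
    f (k + 1) = σ (f k)

/-- Player `p` has a winning strategy from `s₀` on the `m × n` board: a legal
strategy guaranteeing that, against every play of the opponent, `p` wins after
finitely many moves. -/
def WinsFrom (m n : ℤ) (p : Player) (s₀ : PState) : Prop :=
  ∃ σ, LegalStrategy m n p σ ∧
    ∀ f, IsPlay m n f → f 0 = s₀ → Follows m n p σ f → ∃ k, winner m (f k) = some p

/-- Player `p` has a drawing strategy from `s₀` on the `m × n` board: a legal
strategy guaranteeing that the opponent never wins (play may continue forever). -/
def DrawsFrom (m n : ℤ) (p : Player) (s₀ : PState) : Prop :=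
  ∃ σ, LegalStrategy m n p σ ∧
    ∀ f, IsPlay m n f → f 0 = s₀ → Follows m n p σ f → ∀ k, winner m (f k) ≠ some (!p)

/-- A position is drawn if both players have drawing strategies from it. -/
def Drawn (m n : ℤ) (s : PState) : Prop :=
  DrawsFrom m n true s ∧ DrawsFrom m n false s

/-- The chaps of the position `Q` on the 5 × 5 board: b3, c3, c2, d1, e2. -/
def Qchaps : Finset (ℤ × ℤ) := {(2, 3), (3, 3), (3, 2), (4, 1), (5, 2)}

/-- The position `Q`: ball at a2 = (1, 2), chaps at b3, c3, c2, d1, e2,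
Alfred to move. -/
def Q : PState := ⟨(1, 2), Qchaps, true⟩

/-- The result of Alfred placing a chap at c4 = (3, 4) from `Q`. -/
def Qc4 : PState := ⟨(1, 2), insert (3, 4) Qchaps, false⟩

lemma hopQ {b' c'} (h : Hop 5 (1, 2) Qc4.chaps b' c') :
    b' = (4, 5) ∧ c' = ({(3, 3), (3, 2), (4, 1), (5, 2)} : Finset (ℤ × ℤ)) := by
  obtain ⟨d, hd, k, hk1, hmem, hnot, hl, hr, hb', hc'⟩ := h
  have h1 := hmem 1 le_rfl hk1
  fin_cases hd <;> try exact absurd h1 (by decide)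
  rcases (show k = 1 ∨ k = 2 ∨ 3 ≤ k by omega) with rfl | rfl | h3
  · exact absurd (by decide) hnot
  · exact ⟨hb'.trans (by decide), hc'.trans (by decide)⟩
  · exact absurd (hmem 3 (by omega) h3) (by decide)

lemma noHop45 {b' c'} :
    ¬ Hop 5 (4, 5) ({(3, 3), (3, 2), (4, 1), (5, 2)} : Finset (ℤ × ℤ)) b' c' := by
  rintro ⟨d, hd, k, hk1, hmem, -⟩
  have h1 := hmem 1 le_rfl hk1
  fin_cases hd <;> exact absurd h1 (by decide)

lemma jumpQ {b' c'} (h : Jump 5 5 (1, 2) Qc4.chaps b' c') : b' = (4, 5) := by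
  cases h with
  | single h => exact (hopQ h).1
  | cons h _ _ j =>
    obtain ⟨hb₁, hc₁⟩ := hopQ h
    subst hb₁ hc₁
    cases j with
    | single h2 => exact absurd h2 noHop45
    | cons h2 _ _ _ => exact absurd h2 noHop45

lemma hopA (p : ℤ × ℤ) (hp : p ≠ (4, 5)) :
    Hop 5 (1, 2) (insert p Qc4.chaps) (4, 5)
      (insert p Qc4.chaps \
        Finset.image (fun i : ℕ => ray (1, 2) (1, 1) (i : ℤ)) (Finset.Icc 1 2)) := by
  refine ⟨(1, 1), by decide, 2, by norm_num, ?_, ?_, by decide, by decide, by decide, rfl⟩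
  · intro i h1 h2
    interval_cases i
    · exact Finset.mem_insert_of_mem (by decide)
    · exact Finset.mem_insert_of_mem (by decide)
  · intro hm
    rcases Finset.mem_insert.1 hm with h | h
    · exact hp (((by decide : ((4 : ℤ), (5 : ℤ)) = ray (1, 2) (1, 1) ((2 : ℕ) + 1 : ℤ)).trans h).symm)
    · exact absurd h (by decide)

lemma hopA45 :
    Hop 5 (1, 2) (insert ((4 : ℤ), (5 : ℤ)) Qc4.chaps) (5, 6)
      (insert ((4 : ℤ), (5 : ℤ)) Qc4.chaps \
        Finset.image (fun i : ℕ => ray (1, 2) (1, 1) (i : ℤ)) (Finset.Icc 1 3)) := by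
  refine ⟨(1, 1), by decide, 3, by norm_num, ?_, by decide, by decide, by decide, by decide, rfl⟩
  intro i h1 h2
  interval_cases i <;> decide

lemma key (t : PState) (h : MoveRel 5 5 Qc4 t) :
    winner 5 t = some true ∨
    (winner 5 t = none ∧ t.turn = true ∧
      ∃ u, MoveRel 5 5 t u ∧ winner 5 u = some true) := by
  obtain ⟨ht, hmv⟩ := h
  have ht' : t.turn = true := by simpa [Qc4] using ht
  rcases hmv with ⟨p, hob, hpc, hpb, hball, hchaps⟩ | hj
  · right
    have hball' : t.ball = (1, 2) := hball
    refine ⟨by norm_num [winner, hball'], ht', ?_⟩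
    by_cases hp : p = (4, 5)
    · subst hp
      refine ⟨⟨(5, 6), t.chaps \
          Finset.image (fun i : ℕ => ray (1, 2) (1, 1) (i : ℤ)) (Finset.Icc 1 3), false⟩,
        ⟨by simp [ht'], Or.inr (Jump.single ?_)⟩, by norm_num [winner]⟩
      rw [hball', hchaps]
      exact hopA45
    · refine ⟨⟨(4, 5), t.chaps \
          Finset.image (fun i : ℕ => ray (1, 2) (1, 1) (i : ℤ)) (Finset.Icc 1 2), false⟩,
        ⟨by simp [ht'], Or.inr (Jump.single ?_)⟩, by norm_num [winner]⟩
      rw [hball', hchaps]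
      exact hopA p hp
  · left
    have hj' : Jump 5 5 (1, 2) Qc4.chaps t.ball t.chaps := hj
    norm_num [winner, jumpQ hj']

open Classical in
noncomputable def alfredStrat (s : PState) : PState :=
  if h : ∃ u, MoveRel 5 5 s u ∧ winner 5 u = some true then h.choose
  else if h2 : ∃ u, MoveRel 5 5 s u then h2.choose else s

lemma alfredStrat_legal : LegalStrategy 5 5 true alfredStrat := by
  intro s _ _ hex
  by_cases h1 : ∃ u, MoveRel 5 5 s u ∧ winner 5 u = some true
  · unfold alfredStrat
    rw [dif_pos h1]
    exact h1.choose_spec.1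
  · unfold alfredStrat
    rw [dif_neg h1, dif_pos hex]
    exact hex.choose_spec

/-- From `Q`, after Alfred places a chap at c4, Alfred has a winning strategy
from the resulting position (Betty to move): placing the chap is legal; the hop
↗ from a2 over b3 and c4 to d5 = (4, 5) reaches the top row; and no chap
placement or jump available to Betty prevents Alfred from winning on his next
turn. -/
theorem Q_tackle_wins :
    MoveRel 5 5 Q Qc4 ∧
    Hop 5 (1, 2) Qc4.chaps (4, 5) (Qc4.chaps \ {(2, 3), (3, 4)}) ∧
    (∀ t, MoveRel 5 5 Qc4 t →
      winner 5 t = some true ∨ ∃ u, MoveRel 5 5 t u ∧ winner 5 u = some true) ∧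
    WinsFrom 5 5 true Qc4 := by
  refine ⟨⟨rfl, Or.inl ⟨(3, 4), by norm_num [OnBoard], by decide, by decide, rfl, rfl⟩⟩, ?_, ?_, ?_⟩
  · refine ⟨(1, 1), by decide, 2, by norm_num, ?_, by decide, by decide, by decide,
      by decide, by decide⟩
    intro i h1 h2
    interval_cases i <;> decide
  · intro t ht
    rcases key t ht with h | ⟨-, -, u, hu, hwu⟩
    exacts [Or.inl h, Or.inr ⟨u, hu, hwu⟩]
  · refine ⟨alfredStrat, alfredStrat_legal, ?_⟩
    intro f hf h0 hfol
    have w0 : winner 5 (f 0) = none := by rw [h0]; norm_num [winner, Qc4]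
    have hex0 : ∃ t, MoveRel 5 5 (f 0) t := by
      rw [h0]
      exact ⟨⟨(1, 2), insert (1, 1) Qc4.chaps, true⟩, rfl,
        Or.inl ⟨(1, 1), by norm_num [OnBoard], by decide, by decide, rfl, rfl⟩⟩
    rcases hf 0 with ⟨-, -, hm⟩ | ⟨hbad, -⟩
    · rw [h0] at hm
      rcases key (f 1) hm with hw | ⟨w1, t1, u, hu, hwu⟩
      · exact ⟨1, hw⟩
      · have hf2 : f 2 = alfredStrat (f 1) := hfol 1 t1 w1 ⟨u, hu⟩
        have hex : ∃ v, MoveRel 5 5 (f 1) v ∧ winner 5 v = some true := ⟨u, hu, hwu⟩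
        refine ⟨2, ?_⟩
        rw [hf2]
        unfold alfredStrat
        rw [dif_pos hex]
        exact hex.choose_spec.2
    · rcases hbad with h | h
      · exact absurd w0 h
      · exact absurd hex0 h
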